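/- There are no Gaussian integers n, m, n', m' with n·m ≠ 0, gcd(n, m) a unit, gcd(n', m') a unit, m and m' both divisible by 1+i, such that n^2 + (1+i)·m^2 = n'^2 - (1+i)·m'^2 and n·m = n'·m'. -/

import Mathlib

/-!
Write `π = 1 + i`. The two equations of the system give
`((n² - πm²)(n'² + πm'²))² = w⁴ - 16π²(nm)⁴` with `w = n² + πm²`, and `16π² = π¹⁰`. Splitting off
the power of `π` in `nm` turns a solution into a solution of `εz² = x⁴ + δπ^(4j+2)y⁴` with `x, y`
odd and coprime, `ε` a unit and `δ = ±1`. Such solutions descend in `j`: modulo 4 the unit `ε`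
is the square of a unit `θ`; the factors `z ∓ θx²` of `z² - εx⁴` differ by `2θx²`, which is
divisible by exactly `π²`, so one of them is `π²` and the other `π^(4j+4)` times coprime cofactors,
which are fourth powers up to units. Their difference is a solution at level `j - 1`, with `x` in
the role of `z`. At level `0` there is no solution modulo 4.
-/

open Zsqrtd

section Splitting

variable {R : Type*} [CommRing R] {p A B C D : R}

theorem Prime.dvd_and_dvd_of_dvd_mul_of_dvd_sub (hp : Prime p) (hAB : p ∣ A * B)
    (hBA : p ∣ B - A) : p ∣ A ∧ p ∣ B := by
  rcases hp.dvd_or_dvd hAB with hA | hB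
  · exact ⟨hA, (dvd_sub_left hA).1 hBA⟩
  · exact ⟨(dvd_sub_right hB).1 hBA, hB⟩

variable [IsDomain R]

theorem Prime.exists_eq_mul_of_mul_eq_of_sub_eq (hp : Prime p) {k l : ℕ}
    (hAB : A * B = p ^ (k + 2) * C) (hBA : B - A = p ^ (l + 1) * D) :
    ∃ A' B', A = p * A' ∧ B = p * B' ∧ A' * B' = p ^ k * C ∧ B' - A' = p ^ l * D := by
  obtain ⟨⟨A', rfl⟩, ⟨B', rfl⟩⟩ := hp.dvd_and_dvd_of_dvd_mul_of_dvd_sub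
    (by rw [hAB, pow_succ]; exact dvd_mul_of_dvd_left (dvd_mul_left p _) C)
    (by rw [hBA, pow_succ]; exact dvd_mul_of_dvd_left (dvd_mul_left p _) D)
  refine ⟨A', B', rfl, rfl, mul_left_cancel₀ (pow_ne_zero 2 hp.ne_zero) ?_,
    mul_left_cancel₀ hp.ne_zero ?_⟩
  · linear_combination hAB
  · linear_combination hBA

theorem Prime.exists_eq_pow_mul_of_mul_eq_of_sub_eq (hp : Prime p) {n : ℕ} (hn : n ≠ 0)
    (hAB : A * B = p ^ (n + 4) * C) (hBA : B - A = p ^ 2 * D) (hD : ¬ p ∣ D) :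
    ∃ S L, S * L = C ∧
      (A = p ^ (n + 2) * S ∧ B = p ^ 2 * L ∨ A = p ^ 2 * S ∧ B = p ^ (n + 2) * L) := by
  obtain ⟨A, B, rfl, rfl, hAB, hBA⟩ := hp.exists_eq_mul_of_mul_eq_of_sub_eq hAB hBA
  obtain ⟨A, B, rfl, rfl, hAB, hBA⟩ := hp.exists_eq_mul_of_mul_eq_of_sub_eq (l := 0) hAB hBA
  rw [pow_zero, one_mul] at hBA
  have hpAB : p ∣ A * B := hAB ▸ dvd_mul_of_dvd_left (dvd_pow_self p hn) C
  rcases hp.dvd_or_dvd hpAB with hA | hB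
  · have hB : ¬ p ∣ B := fun hB => hD (hBA ▸ dvd_sub hB hA)
    obtain ⟨S, rfl⟩ := hp.pow_dvd_of_dvd_mul_right n hB (hAB ▸ dvd_mul_right _ C)
    refine ⟨S, B, mul_left_cancel₀ (pow_ne_zero n hp.ne_zero) ?_, .inl ⟨by ring, by ring⟩⟩
    linear_combination hAB
  · have hA : ¬ p ∣ A := fun hA => hD (hBA ▸ dvd_sub hB hA)
    obtain ⟨L, rfl⟩ := hp.pow_dvd_of_dvd_mul_left n hA (hAB ▸ dvd_mul_right _ C)
    refine ⟨A, L, mul_left_cancel₀ (pow_ne_zero n hp.ne_zero) ?_, .inr ⟨by ring, by ring⟩⟩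
    linear_combination hAB

end Splitting

theorem resolvent_sq_eq {R : Type*} [CommRing R] {c n m n' m' : R}
    (h : n ^ 2 + c * m ^ 2 = n' ^ 2 - c * m' ^ 2) (h' : n * m = n' * m') :
    ((n ^ 2 - c * m ^ 2) * (n' ^ 2 + c * m' ^ 2)) ^ 2
      = (n ^ 2 + c * m ^ 2) ^ 4 - 16 * c ^ 2 * (n * m) ^ 4 := by
  linear_combination (-((n ^ 2 + c * m ^ 2) ^ 2 - 4 * c * (n * m) ^ 2)) *
    ((n ^ 2 + c * m ^ 2 + (n' ^ 2 - c * m' ^ 2)) * h + 4 * c * (n * m + n' * m') * h')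

theorem IsCoprime.sq_add_mul_sq {R : Type*} [CommRing R] {c n m : R} (h : IsCoprime n m)
    (hc : IsCoprime c n) : IsCoprime (n ^ 2 + c * m ^ 2) (n * m) := by
  refine IsCoprime.mul_right ?_ ?_
  · rw [add_comm, sq n]
    exact (hc.mul_left h.symm.pow_left).add_mul_left_left n
  · simpa only [sq m, ← mul_assoc] using h.pow_left.add_mul_right_left (c * m)

theorem Prime.not_dvd_of_dvd_mul_sq_sub {R : Type*} [CommRing R] {p ε x z : R} (hp : Prime p)
    (hx : ¬ p ∣ x) (h : p ∣ ε * z ^ 2 - x ^ 4) : ¬ p ∣ z := fun hz =>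
  hx <| hp.dvd_of_dvd_pow (n := 4) <|
    (dvd_sub_right (dvd_mul_of_dvd_right (dvd_pow hz two_ne_zero) ε)).1 h

local notation "ℤ[i]" => GaussianInt
local notation "π" => (1 + sqrtd : ℤ[i])

namespace GaussianInt

theorem sqrtd_sq : (sqrtd : ℤ[i]) ^ 2 = -1 := by decide

theorem isUnit_sqrtd : IsUnit (sqrtd : ℤ[i]) :=
  .of_mul_eq_one (-sqrtd) (by linear_combination -sqrtd_sq)

theorem one_add_sqrtd_sq : π ^ 2 = 2 * sqrtd := by linear_combination sqrtd_sq

theorem one_add_sqrtd_pow_four : π ^ 4 = -4 := by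
  linear_combination (π ^ 2 + 2 * sqrtd) * one_add_sqrtd_sq + 4 * sqrtd_sq

theorem prime_one_add_sqrtd : Prime π := by
  rw [← UniqueFactorizationMonoid.irreducible_iff_prime]
  refine ⟨by rw [← Zsqrtd.norm_eq_one_iff]; decide, fun a b hab => ?_⟩
  have hnorm : (norm a).natAbs * (norm b).natAbs = 2 := by
    rw [← Int.natAbs_mul, ← Zsqrtd.norm_mul, ← hab]; decide
  simp only [← Zsqrtd.norm_eq_one_iff]
  rcases Nat.prime_two.eq_one_or_self_of_dvd _ (Dvd.intro _ hnorm) with h | h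
  · exact .inl h
  · rw [h] at hnorm; omega

theorem one_add_sqrtd_dvd_of_even {u : ℤ[i]} (h : Even (u.re + u.im)) : π ∣ u := by
  obtain ⟨k, hk⟩ := h
  refine ⟨⟨k, k - u.re⟩, ?_⟩
  ext <;> simp only [re_mul, im_mul, re_add, im_add, re_one, im_one, re_sqrtd, im_sqrtd] <;> omega

theorem isUnit_iff {u : ℤ[i]} : IsUnit u ↔ u = 1 ∨ u = -1 ∨ u = sqrtd ∨ u = -sqrtd := by
  refine ⟨fun hu => ?_, ?_⟩
  · have h : u.re * u.re + u.im * u.im = 1 := by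
      simpa [Zsqrtd.norm_def] using (Zsqrtd.norm_eq_one_iff' (by norm_num) u).2 hu
    obtain ⟨a, b⟩ := u
    obtain ⟨ha₁, ha₂⟩ : -1 ≤ a ∧ a ≤ 1 := by constructor <;> nlinarith
    obtain ⟨hb₁, hb₂⟩ : -1 ≤ b ∧ b ≤ 1 := by constructor <;> nlinarith
    simp only at h
    interval_cases a <;> interval_cases b <;> first | omega | decide
  · rintro (rfl | rfl | rfl | rfl)
    exacts [isUnit_one, isUnit_one.neg, isUnit_sqrtd, isUnit_sqrtd.neg]

theorem pow_four_eq_one_of_isUnit {u : ℤ[i]} (hu : IsUnit u) : u ^ 4 = 1 := by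
  rcases isUnit_iff.1 hu with rfl | rfl | rfl | rfl <;> decide

theorem four_dvd_iff {u : ℤ[i]} : 4 ∣ u ↔ 4 ∣ u.re ∧ 4 ∣ u.im :=
  Zsqrtd.intCast_dvd 4 u

theorem eq_one_of_four_dvd_sub_one {u : ℤ[i]} (hu : IsUnit u) (h : 4 ∣ u - 1) : u = 1 := by
  rw [four_dvd_iff] at h
  rcases isUnit_iff.1 hu with rfl | rfl | rfl | rfl <;> revert h <;> decide

theorem not_four_dvd_sub_one_add_mul_one_add_sqrtd_sq {u δ : ℤ[i]} (hu : IsUnit u)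
    (hδ : δ ^ 2 = 1) : ¬ 4 ∣ u - (1 + δ * π ^ 2) := by
  rw [four_dvd_iff]
  rcases isUnit_iff.1 hu with rfl | rfl | rfl | rfl <;> rcases sq_eq_one_iff.1 hδ with rfl | rfl <;>
    decide

theorem exists_four_dvd_sq_sub {u : ℤ[i]} (hu : ¬ π ∣ u) :
    ∃ t : ℤ[i], t ^ 2 = 1 ∧ 4 ∣ u ^ 2 - t := by
  have hodd : ¬ Even (u.re + u.im) := fun h => hu (one_add_sqrtd_dvd_of_even h)
  rw [Int.even_add] at hodd
  rcases Int.even_or_odd u.re with ⟨x, hx⟩ | ⟨x, hx⟩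
  · obtain ⟨y, hy⟩ : Odd u.im := Int.not_even_iff_odd.1 fun h => hodd (iff_of_true ⟨x, hx⟩ h)
    refine ⟨-1, by norm_num, ⟨x ^ 2 - y ^ 2 - y, (2 * y + 1) * x⟩, ?_⟩
    ext <;> simp only [sq, re_sub, im_sub, re_mul, im_mul, re_neg, im_neg, re_one, im_one, re_ofNat,
      im_ofNat, hx, hy] <;> ring
  · obtain ⟨y, hy⟩ : Even u.im := by
      by_contra h
      exact hodd (iff_of_false (Int.not_even_iff_odd.2 ⟨x, hx⟩) h)
    refine ⟨1, by norm_num, ⟨x ^ 2 + x - y ^ 2, (2 * x + 1) * y⟩, ?_⟩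
    ext <;> simp only [sq, re_sub, im_sub, re_mul, im_mul, re_one, im_one, re_ofNat,
      im_ofNat, hx, hy] <;> ring

theorem four_dvd_pow_four_sub_one {u : ℤ[i]} (hu : ¬ π ∣ u) : 4 ∣ u ^ 4 - 1 := by
  obtain ⟨t, ht, c, hc⟩ := exists_four_dvd_sq_sub hu
  exact ⟨c * (2 * t + 4 * c), by linear_combination (u ^ 2 + t + 4 * c) * hc + ht⟩

theorem exists_isUnit_sq_eq_of_four_dvd {ε x z : ℤ[i]} (hε : IsUnit ε) (hx : ¬ π ∣ x)
    (h : 4 ∣ ε * z ^ 2 - x ^ 4) : ∃ θ, IsUnit θ ∧ θ ^ 2 = ε := by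
  have hπ4 : π ∣ 4 := ⟨-π ^ 3, by linear_combination one_add_sqrtd_pow_four⟩
  have hz : ¬ π ∣ z := prime_one_add_sqrtd.not_dvd_of_dvd_mul_sq_sub hx (hπ4.trans h)
  obtain ⟨t, ht, c, hc⟩ := exists_four_dvd_sq_sub hz
  obtain ⟨d, hd⟩ := four_dvd_pow_four_sub_one hx
  obtain ⟨e, he⟩ := h
  have hεt : ε * t = 1 := eq_one_of_four_dvd_sub_one (hε.mul (.of_pow_eq_one ht two_ne_zero))
    ⟨e + d - ε * c, by linear_combination he + hd - ε * hc⟩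
  have hε2 : ε ^ 2 = 1 := by linear_combination -ε ^ 2 * ht + (ε * t + 1) * hεt
  rcases sq_eq_one_iff.1 hε2 with rfl | rfl
  exacts [⟨1, isUnit_one, one_pow 2⟩, ⟨sqrtd, isUnit_sqrtd, sqrtd_sq⟩]

def HasQuarticSolution (j : ℕ) : Prop :=
  ∃ x y z ε δ : ℤ[i], IsUnit ε ∧ δ ^ 2 = 1 ∧ ¬ π ∣ x ∧ ¬ π ∣ y ∧ IsCoprime x y ∧
    ε * z ^ 2 = x ^ 4 + δ * π ^ (4 * j + 2) * y ^ 4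

theorem not_hasQuarticSolution_zero : ¬ HasQuarticSolution 0 := by
  rintro ⟨x, y, z, ε, δ, hε, hδ, hx, hy, -, h⟩
  have hz : ¬ π ∣ z :=
    prime_one_add_sqrtd.not_dvd_of_dvd_mul_sq_sub hx ⟨δ * π * y ^ 4, by rw [h]; ring⟩
  obtain ⟨t, ht, c, hc⟩ := exists_four_dvd_sq_sub hz
  obtain ⟨d, hd⟩ := four_dvd_pow_four_sub_one hx
  obtain ⟨e, he⟩ := four_dvd_pow_four_sub_one hy
  exact not_four_dvd_sub_one_add_mul_one_add_sqrtd_sq (hε.mul (.of_pow_eq_one ht two_ne_zero)) hδ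
    ⟨d + δ * π ^ 2 * e - ε * c, by linear_combination h + hd + δ * π ^ 2 * he - ε * hc⟩

theorem hasQuarticSolution_of_sub_eq {j : ℕ} {x y S L η ζ : ℤ[i]} (hy : ¬ π ∣ y)
    (hxy : IsCoprime x y) (hη : η ^ 2 = 1) (hζ : IsUnit ζ) (hSL : S * L = η * y ^ 4)
    (hSLx : S - π ^ (4 * j + 2) * L = ζ * x ^ 2) : HasQuarticSolution j := by
  have hSηL : S * (η * L) = y ^ 4 := by linear_combination η * hSL + y ^ 4 * hη
  have hcop : IsCoprime S L := by
    have hx : IsCoprime S (-(ζ * x ^ 2)) :=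
      ((isCoprime_mul_unit_left_right hζ _ _).2 hxy.symm.pow).neg_right.of_isCoprime_of_dvd_left
        (Dvd.intro _ hSηL)
    have hπL : IsCoprime S (π ^ (4 * j + 2) * L) := by
      simpa [← hSLx] using hx.add_mul_left_right 1
    exact hπL.of_mul_right_right
  obtain ⟨a, u, rfl⟩ := exists_associated_pow_of_mul_eq_pow'
    ((isCoprime_mul_unit_left_right (.of_pow_eq_one hη two_ne_zero) _ _).2 hcop) hSηL
  -- only `S` needs a fourth root: `a⁴ ∣ y⁴` gives `y = a * b`, and then `L` is a unit times `b⁴`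
  obtain ⟨b, rfl⟩ : a ∣ y := (IsIntegrallyClosed.pow_dvd_pow_iff four_ne_zero).1
    ((dvd_mul_right _ _).trans (Dvd.intro _ hSηL))
  have ha : a ≠ 0 := by rintro rfl; simp at hy
  obtain rfl : L = η * ↑u⁻¹ * b ^ 4 := by
    refine mul_left_cancel₀ (pow_ne_zero 4 ha) ?_
    linear_combination ↑u⁻¹ * hSL - a ^ 4 * L * u.inv_mul
  refine ⟨a, b, x, ζ * ↑u⁻¹, -(η * ↑u⁻¹ ^ 2), hζ.mul u⁻¹.isUnit, ?_,
    fun h => hy (h.trans (dvd_mul_right a b)), fun h => hy (h.trans (dvd_mul_left b a)),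
    (hcop.of_isCoprime_of_dvd_left ⟨a ^ 3 * u, by ring⟩).of_isCoprime_of_dvd_right
      ⟨η * ↑u⁻¹ * b ^ 3, by ring⟩, ?_⟩
  · linear_combination (↑u⁻¹ ^ 4) * hη + pow_four_eq_one_of_isUnit u⁻¹.isUnit
  · linear_combination -↑u⁻¹ * hSLx + a ^ 4 * u.inv_mul

theorem HasQuarticSolution.of_succ {j : ℕ} (h : HasQuarticSolution (j + 1)) :
    HasQuarticSolution j := by
  obtain ⟨x, y, z, ε, δ, hε, hδ, hx, hy, hxy, h⟩ := h
  obtain ⟨θ, hθ, hθε⟩ := exists_isUnit_sq_eq_of_four_dvd (z := z) hε hx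
    ⟨-δ * π ^ (4 * j + 2) * y ^ 4, by
      linear_combination h + δ * π ^ (4 * j + 2) * y ^ 4 * one_add_sqrtd_pow_four⟩
  have hε2 : ε ^ 2 = 1 := by rw [← hθε, ← pow_mul]; exact pow_four_eq_one_of_isUnit hθ
  have hη : (ε * δ) ^ 2 = 1 := by rw [mul_pow, hε2, hδ, one_mul]
  have hBA : z + θ * x ^ 2 - (z - θ * x ^ 2) = π ^ 2 * (-sqrtd * θ * x ^ 2) := by
    linear_combination sqrtd * θ * x ^ 2 * one_add_sqrtd_sq + 2 * θ * x ^ 2 * sqrtd_sq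
  obtain ⟨S, L, hSL, hsplit⟩ := prime_one_add_sqrtd.exists_eq_pow_mul_of_mul_eq_of_sub_eq
    (n := 4 * j + 2) (C := ε * δ * y ^ 4) (by omega)
    (by linear_combination ε * h - x ^ 4 * hθε - z ^ 2 * hε2) hBA
    fun h => hx (prime_one_add_sqrtd.dvd_of_dvd_pow ((isUnit_sqrtd.neg.mul hθ).dvd_mul_left.1 h))
  have hπ2 : π ^ 2 ≠ 0 := pow_ne_zero 2 prime_one_add_sqrtd.ne_zero
  rcases hsplit with ⟨hA, hB⟩ | ⟨hA, hB⟩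
  · refine hasQuarticSolution_of_sub_eq hy hxy hη (isUnit_sqrtd.neg.mul hθ)
      ((mul_comm L S).trans hSL) (mul_left_cancel₀ hπ2 ?_)
    linear_combination hBA - hB + hA
  · refine hasQuarticSolution_of_sub_eq hy hxy hη (isUnit_sqrtd.mul hθ) hSL
      (mul_left_cancel₀ hπ2 ?_)
    linear_combination hB - hA - hBA

theorem not_hasQuarticSolution : ∀ j, ¬ HasQuarticSolution j
  | 0 => not_hasQuarticSolution_zero
  | j + 1 => fun h => not_hasQuarticSolution j h.of_succ

end GaussianInt

open GaussianInt

/-- The resolvent system arising from `x⁴ + (1+i)·y² = z⁴` has no solutions: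
there are no Gaussian integers `n, m, n', m'` with `n * m ≠ 0`, `gcd (n, m)` a
unit, `gcd (n', m')` a unit, `m` and `m'` both divisible by `1 + i`, such that
`n² + (1+i)·m² = n'² - (1+i)·m'²` and `n·m = n'·m'`. -/
theorem no_solution_resolvent_system_one_add_i :
    ¬ ∃ n m n' m' : GaussianInt, n * m ≠ 0 ∧
      (∀ d : GaussianInt, d ∣ n → d ∣ m → IsUnit d) ∧
      (∀ d : GaussianInt, d ∣ n' → d ∣ m' → IsUnit d) ∧
      (1 + sqrtd) ∣ m ∧ (1 + sqrtd) ∣ m' ∧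
      n ^ 2 + (1 + sqrtd) * m ^ 2 = n' ^ 2 - (1 + sqrtd) * m' ^ 2 ∧
      n * m = n' * m' := by
  rintro ⟨n, m, n', m', hnm0, hnm, -, hm, -, h, h'⟩
  have hπ := prime_one_add_sqrtd
  have hn : ¬ π ∣ n := fun hn => hπ.not_isUnit (hnm π hn hm)
  obtain ⟨τ, q, hq, hnmq⟩ := WfDvdMonoid.max_power_factor hnm0 hπ.irreducible
  have hcop : IsCoprime (n ^ 2 + π * m ^ 2) (n * m) :=
    IsRelPrime.isCoprime hnm |>.sq_add_mul_sq ((hπ.coprime_iff_not_dvd).2 hn)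
  refine not_hasQuarticSolution (τ + 2)
    ⟨n ^ 2 + π * m ^ 2, q, (n ^ 2 - π * m ^ 2) * (n' ^ 2 + π * m' ^ 2), 1, -1, isUnit_one,
      neg_one_sq, fun h => hn (hπ.dvd_of_dvd_pow ((dvd_add_left (dvd_mul_right _ _)).1 h)), hq,
      hcop.of_isCoprime_of_dvd_right (Dvd.intro_left _ hnmq.symm), ?_⟩
  rw [one_mul, resolvent_sq_eq h h', hnmq]
  linear_combination π ^ (4 * τ + 2) * q ^ 4 * (π ^ 4 - 4) * one_add_sqrtd_pow_four
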